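/- arXiv:2203.02210 — 3 statements merged into one kernel-verified Lean document; each statement's English description precedes it below -/
import Mathlib

section
/- Consider the symmetric block matrix P = [[mI, -R],[-Rᵀ, mRᵀ(L²)⁺R]] where (·)⁺ denotes the Moore–Penrose pseudoinverse, L is the Laplacian of a connected graph, R has orthonormal columns orthogonal to ker(L), and m > 0. If m > 1/√(min σ(Rᵀ(L²)⁺R)), then P is positive definite. -/
open Matrix
open scoped ComplexOrder Pointwise

/-!
With `S = Rᵀ (L²)⁺ R` and `RᵀR = I`, the Schur complement of the block `m I` in `P` is
`m S - m⁻¹ I = m (S - m⁻² I)`, so `P` is positive definite as soon as every eigenvalue of `S`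
exceeds `m⁻²`, which is what the bound on `m` says once `min σ(S) > 0` (without that, `√` and `1 / ·`
return junk values). To see that `S` is positive definite: `(L²)⁺ = (L (L²)⁺)ᵀ (L (L²)⁺)` is
positive semidefinite, so `yᵀ S y = 0` forces `(L²)⁺ R y = 0`; and `(L²)⁺ L²` is the orthogonal
projection onto `(ker L)ᗮ`, which contains the range of `R`, so `R y = L² (L²)⁺ R y = 0`, whence
`y = 0`.
-/

namespace Matrix

variable {𝕜 : Type*} [RCLike 𝕜] {m n k : Type*} [Fintype m] [Fintype n] [Fintype k]

structure IsMoorePenroseInverse (A : Matrix m n 𝕜) (X : Matrix n m 𝕜) : Prop where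
  mul_mul_eq_left : A * X * A = A
  mul_mul_eq_right : X * A * X = X
  isHermitian_mul_left : (A * X).IsHermitian
  isHermitian_mul_right : (X * A).IsHermitian

namespace IsMoorePenroseInverse

variable {A : Matrix n n 𝕜} {X : Matrix n n 𝕜}

theorem mul_comm (h : IsMoorePenroseInverse A X) (hA : A.IsHermitian) : A * X = X * A := by
  have hXhA : Xᴴ * A = A * X := by
    simpa [conjTranspose_mul, hA.eq] using h.isHermitian_mul_left.eq
  have hAXh : A * Xᴴ = X * A := by
    simpa [conjTranspose_mul, hA.eq] using h.isHermitian_mul_right.eq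
  have hAXhA : A * Xᴴ * A = A := by
    simpa [conjTranspose_mul, hA.eq, Matrix.mul_assoc] using
      congrArg conjTranspose h.mul_mul_eq_left
  calc A * X = A * Xᴴ * A * X := by rw [hAXhA]
    _ = X * A * (Xᴴ * A) := by rw [hXhA, ← hAXh, Matrix.mul_assoc]
    _ = X * (A * Xᴴ * A) := by simp only [Matrix.mul_assoc]
    _ = X * A := by rw [hAXhA]

theorem isHermitian (h : IsMoorePenroseInverse A X) (hA : A.IsHermitian) : X.IsHermitian := by
  have hAXh : A * Xᴴ = X * A := by
    simpa [conjTranspose_mul, hA.eq] using h.isHermitian_mul_right.eq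
  calc Xᴴ = (X * (A * X))ᴴ := by rw [← Matrix.mul_assoc, h.mul_mul_eq_right]
    _ = X * (A * Xᴴ) := by
      rw [conjTranspose_mul, h.isHermitian_mul_left.eq, h.mul_comm hA, Matrix.mul_assoc]
    _ = X * (A * X) := by rw [hAXh, h.mul_comm hA]
    _ = X := by rw [← Matrix.mul_assoc, h.mul_mul_eq_right]

theorem posSemidef {B : Matrix m n 𝕜} (h : IsMoorePenroseInverse (Bᴴ * B) X) : X.PosSemidef := by
  have hX := h.isHermitian (isHermitian_conjTranspose_mul_self B)
  have hgram : X = (B * X)ᴴ * (B * X) := by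
    rw [conjTranspose_mul, hX.eq]
    simpa [Matrix.mul_assoc] using h.mul_mul_eq_right.symm
  exact hgram ▸ posSemidef_conjTranspose_mul_self _

theorem mul_mulVec_eq_self {A : Matrix m n 𝕜} {X : Matrix n m 𝕜} (h : IsMoorePenroseInverse A X)
    {w : n → 𝕜} (hw : ∀ u, A *ᵥ u = 0 → star u ⬝ᵥ w = 0) : (X * A) *ᵥ w = w := by
  set u := w - (X * A) *ᵥ w
  have hAu : A *ᵥ u = 0 := by
    rw [mulVec_sub, mulVec_mulVec, ← Matrix.mul_assoc, h.mul_mul_eq_left, sub_self]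
  have hXAu : star u ⬝ᵥ (X * A) *ᵥ w = 0 := by
    rw [dotProduct_mulVec, ← h.isHermitian_mul_right.eq, ← star_mulVec, ← mulVec_mulVec, hAu,
      mulVec_zero, star_zero, zero_dotProduct]
  have hu : star u ⬝ᵥ u = 0 := by
    rw [dotProduct_sub, hw u hAu, hXAu, sub_zero]
  exact (sub_eq_zero.mp (dotProduct_star_self_eq_zero.mp hu)).symm

theorem posDef_conjTranspose_mul_mul {B : Matrix m n 𝕜} {X : Matrix n n 𝕜}
    (h : IsMoorePenroseInverse (Bᴴ * B) X) {R : Matrix n k 𝕜} (hR : Function.Injective R.mulVec)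
    (horth : ∀ u y, B *ᵥ u = 0 → star u ⬝ᵥ R *ᵥ y = 0) : (Rᴴ * X * R).PosDef := by
  have hS := h.posSemidef.conjTranspose_mul_mul_same R
  refine PosDef.of_dotProduct_mulVec_pos hS.1 fun y hy =>
    (hS.dotProduct_mulVec_nonneg y).lt_of_ne' fun hy0 => hy (hR ?_)
  have hXRy : X *ᵥ (R *ᵥ y) = 0 := by
    rw [← h.posSemidef.dotProduct_mulVec_zero_iff, star_mulVec, ← dotProduct_mulVec,
      mulVec_mulVec, mulVec_mulVec]
    exact hy0
  have hRy : R *ᵥ y = 0 := by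
    have hker : ∀ u, (Bᴴ * B) *ᵥ u = 0 → star u ⬝ᵥ R *ᵥ y = 0 := fun u hu =>
      horth u y ((conjTranspose_mul_self_mulVec_eq_zero B u).1 hu)
    rw [← h.mul_mulVec_eq_self hker, ← h.mul_comm (isHermitian_conjTranspose_mul_self B),
      ← mulVec_mulVec, hXRy, mulVec_zero]
  rw [hRy, mulVec_zero]

end IsMoorePenroseInverse

theorem PosDef.posDef_fromBlocks₁₁_iff [DecidableEq m] [DecidableEq n] {A : Matrix m m 𝕜}
    (B : Matrix m n 𝕜) (D : Matrix n n 𝕜) (hA : A.PosDef) [Invertible A] :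
    (fromBlocks A B Bᴴ D).PosDef ↔ (D - Bᴴ * A⁻¹ * B).PosDef := by
  have hunit : IsUnit (fromBlocks A B Bᴴ D) ↔ IsUnit (D - Bᴴ * A⁻¹ * B) := by
    rw [isUnit_iff_isUnit_det, isUnit_iff_isUnit_det, det_fromBlocks₁₁, invOf_eq_nonsing_inv,
      IsUnit.mul_iff, and_iff_right ((isUnit_iff_isUnit_det A).1 hA.isUnit)]
  constructor
  · intro hP
    exact ((PosDef.fromBlocks₁₁ B D hA).1 hP.posSemidef).posDef_iff_isUnit.2
      (hunit.1 hP.isUnit)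
  · intro hS
    exact ((PosDef.fromBlocks₁₁ B D hA).2 hS.posSemidef).posDef_iff_isUnit.2
      (hunit.2 hS.isUnit)

theorem PosDef.pos_of_mem_spectrum [DecidableEq n] {S : Matrix n n 𝕜} (hS : S.PosDef) {μ : ℝ}
    (hμ : μ ∈ spectrum ℝ S) : 0 < μ := by
  rw [hS.1.spectrum_real_eq_range_eigenvalues] at hμ
  obtain ⟨i, rfl⟩ := hμ
  exact hS.eigenvalues_pos i

theorem IsHermitian.posDef_sub_smul_one [DecidableEq n] {S : Matrix n n 𝕜} (hS : S.IsHermitian)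
    {t : ℝ} (ht : ∀ μ ∈ spectrum ℝ S, t < μ) : (S - t • (1 : Matrix n n 𝕜)).PosDef := by
  have hT : (S - t • (1 : Matrix n n 𝕜)).IsHermitian :=
    hS.sub (isHermitian_one.smul (IsSelfAdjoint.all t))
  rw [hT.posDef_iff_eigenvalues_pos]
  intro i
  have hmem : hT.eigenvalues i ∈ spectrum ℝ S - ({t} : Set ℝ) := by
    rw [spectrum.sub_singleton_eq, Algebra.algebraMap_eq_smul_one]
    exact hT.eigenvalues_mem_spectrum_real i
  obtain ⟨μ, hμ, _, rfl, hi⟩ := hmem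
  linarith [ht μ hμ]

end Matrix

theorem inv_sq_lt_of_one_div_sqrt_lt {c m : ℝ} (hc : 0 < c) (hm : 1 / √c < m) : (m ^ 2)⁻¹ < c := by
  have hsqrt : 0 < √c := Real.sqrt_pos.mpr hc
  have h1 : 1 < m * √c := (div_lt_iff₀ hsqrt).1 hm
  have hm0 : 0 < m := pos_of_mul_pos_left (one_pos.trans h1) hsqrt.le
  rw [inv_lt_iff_one_lt_mul₀ (by positivity)]
  nlinarith [Real.sq_sqrt hc.le]

theorem P_posdef_general
    (N d : ℕ)
    (ones : Matrix (Fin N × Fin d) (Fin d) ℝ)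
    (L : Matrix (Fin N × Fin d) (Fin N × Fin d) ℝ)
    (hL : L.PosSemidef)
    (hker : ∀ v : Fin N × Fin d → ℝ,
      L.mulVec v = 0 ↔ ∃ w : Fin d → ℝ, v = ones.mulVec w)
    (R : Matrix (Fin N × Fin d) (Fin (N - 1) × Fin d) ℝ)
    (hRR : Rᵀ * R = 1) (hRones : Rᵀ * ones = 0)
    -- `L2p` is the Moore–Penrose pseudoinverse of `L²`:
    (L2p : Matrix (Fin N × Fin d) (Fin N × Fin d) ℝ)
    (hmp1 : L * L * L2p * (L * L) = L * L)
    (hmp2 : L2p * (L * L) * L2p = L2p)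
    (hmp3 : (L * L * L2p)ᵀ = L * L * L2p)
    (hmp4 : (L2p * (L * L))ᵀ = L2p * (L * L))
    (m : ℝ) (hm0 : 0 < m)
    (hm : 1 / Real.sqrt (sInf (spectrum ℝ (Rᵀ * L2p * R))) < m) :
    (Matrix.fromBlocks (m • (1 : Matrix (Fin N × Fin d) (Fin N × Fin d) ℝ)) (-R)
      (-Rᵀ) (m • (Rᵀ * L2p * R))).PosDef := by
  set S := Rᵀ * L2p * R
  have hMP : IsMoorePenroseInverse (Lᴴ * L) L2p := by
    rw [hL.isHermitian.eq]
    exact ⟨hmp1, hmp2, hmp3, hmp4⟩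
  have hRinj : Function.Injective R.mulVec := fun y y' h => by
    simpa [mulVec_mulVec, hRR] using congrArg (Rᵀ *ᵥ ·) h
  have horth : ∀ u y, L *ᵥ u = 0 → star u ⬝ᵥ R *ᵥ y = 0 := by
    intro u y hu
    obtain ⟨w, rfl⟩ := (hker u).1 hu
    have honesR : onesᵀ * R = 0 := by simpa [transpose_mul] using congrArg transpose hRones
    rw [star_trivial, dotProduct_comm, dotProduct_mulVec, ← mulVec_transpose, mulVec_mulVec,
      honesR, zero_mulVec, zero_dotProduct]
  have hS : S.PosDef := by
    simpa [conjTranspose_eq_transpose_of_trivial] using hMP.posDef_conjTranspose_mul_mul hRinj horth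
  have hspec : ∀ μ ∈ spectrum ℝ S, (m ^ 2)⁻¹ < μ := fun μ hμ =>
    have hmin := (Set.nonempty_of_mem hμ).csInf_mem S.finite_real_spectrum
    (inv_sq_lt_of_one_div_sqrt_lt (hS.pos_of_mem_spectrum hmin) hm).trans_le
      (csInf_le S.finite_real_spectrum.bddBelow hμ)
  have hA : (m • (1 : Matrix (Fin N × Fin d) (Fin N × Fin d) ℝ)).PosDef := PosDef.one.smul hm0
  let := hA.isUnit.invertible
  have hschur : m • S - (-R)ᴴ * (m • (1 : Matrix (Fin N × Fin d) (Fin N × Fin d) ℝ))⁻¹ * (-R) =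
      m • (S - (m ^ 2)⁻¹ • (1 : Matrix (Fin (N - 1) × Fin d) (Fin (N - 1) × Fin d) ℝ)) := by
    have hm2 : m * (m ^ 2)⁻¹ = m⁻¹ := by field_simp
    rw [inv_eq_left_inv (B := m⁻¹ • 1) (by simp [smul_smul, hm0.ne'])]
    simp [conjTranspose_eq_transpose_of_trivial, hRR, smul_sub, smul_smul, hm2]
  simpa [conjTranspose_eq_transpose_of_trivial] using (hA.posDef_fromBlocks₁₁_iff (-R) (m • S)).2
    (hschur ▸ (hS.1.posDef_sub_smul_one hspec).smul hm0)

/-- With `P = [[m I, -R], [-Rᵀ, m Rᵀ (L²)⁺ R]]`, where `(L²)⁺` is the Moore–Penrose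
pseudoinverse of `L²`, if `m > 1/√(min σ(Rᵀ (L²)⁺ R))` then `P` is positive definite. -/
theorem P_posdef
    (N d : ℕ) (hN : 0 < N)
    (ones : Matrix (Fin N × Fin d) (Fin d) ℝ)
    (hones : ones = Matrix.of fun p j => if p.2 = j then (1 : ℝ) else 0)
    (L : Matrix (Fin N × Fin d) (Fin N × Fin d) ℝ)
    (hL : L.PosSemidef)
    (hker : ∀ v : Fin N × Fin d → ℝ,
      L.mulVec v = 0 ↔ ∃ w : Fin d → ℝ, v = ones.mulVec w)
    (R : Matrix (Fin N × Fin d) (Fin (N - 1) × Fin d) ℝ)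
    (hRR : Rᵀ * R = 1) (hRones : Rᵀ * ones = 0)
    -- `L2p` is the Moore–Penrose pseudoinverse of `L²`:
    (L2p : Matrix (Fin N × Fin d) (Fin N × Fin d) ℝ)
    (hmp1 : L * L * L2p * (L * L) = L * L)
    (hmp2 : L2p * (L * L) * L2p = L2p)
    (hmp3 : (L * L * L2p)ᵀ = L * L * L2p)
    (hmp4 : (L2p * (L * L))ᵀ = L2p * (L * L))
    (m : ℝ) (hm0 : 0 < m)
    (hm : 1 / Real.sqrt (sInf (spectrum ℝ (Rᵀ * L2p * R))) < m) :
    (Matrix.fromBlocks (m • (1 : Matrix (Fin N × Fin d) (Fin N × Fin d) ℝ)) (-R)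
      (-Rᵀ) (m • (Rᵀ * L2p * R))).PosDef :=
  P_posdef_general N d ones L hL hker R hRR hRones L2p hmp1 hmp2 hmp3 hmp4 m hm0 hm
end

section
/- Let ζ : [t_k, T) → ℝ^n \ {0} and e : [t_k, T) → ℝ^n be differentiable with ė(t) = -ζ̇(t), and suppose ‖ζ̇(t)‖ ≤ (‖A‖ + β)‖ζ(t)‖ + (1 + β)‖E‖·‖e(t)‖ for all t. Then r(t) := ‖e(t)‖/‖ζ(t)‖ satisfies (whenever e(t) ≠ 0) the differential inequality ṙ(t) ≤ β(1 + r(t)) + c(1 + r(t))², where c := max{‖A‖, (1+β)‖E‖}. -/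
open scoped RealInnerProductSpace

section NormRatio

variable {E : Type*} [NormedAddCommGroup E] [InnerProductSpace ℝ E] {f g : ℝ → E} {f' g' : E}
  {t : ℝ}

theorem HasDerivAt.norm (hf : HasDerivAt f f' t) (h0 : f t ≠ 0) :
    HasDerivAt (‖f ·‖) (⟪f t, f'⟫ / ‖f t‖) t := by
  have hsq : ‖f t‖ ^ 2 ≠ 0 := by positivity
  convert hf.norm_sq.sqrt hsq using 1
  · simp only [Real.sqrt_sq (norm_nonneg _)]
  · rw [Real.sqrt_sq (norm_nonneg _)]
    ring

theorem deriv_norm_div_norm_le (hf : HasDerivAt f f' t) (hg : HasDerivAt g g' t)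
    (hf0 : f t ≠ 0) (hg0 : g t ≠ 0) :
    deriv (fun s => ‖f s‖ / ‖g s‖) t ≤ (‖f'‖ + ‖f t‖ / ‖g t‖ * ‖g'‖) / ‖g t‖ := by
  have hu : 0 < ‖f t‖ := norm_pos_iff.2 hf0
  have hv : 0 < ‖g t‖ := norm_pos_iff.2 hg0
  rw [((hf.norm hf0).fun_div (hg.norm hg0) hv.ne').deriv]
  have hfc : ⟪f t, f'⟫ / ‖f t‖ ≤ ‖f'‖ := by
    rw [div_le_iff₀ hu, mul_comm]
    exact real_inner_le_norm _ _
  have hgc : -‖g'‖ ≤ ⟪g t, g'⟫ / ‖g t‖ := by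
    rw [le_div_iff₀ hv, neg_mul, neg_le, mul_comm, ← inner_neg_right, ← norm_neg g']
    exact real_inner_le_norm _ _
  calc (⟪f t, f'⟫ / ‖f t‖ * ‖g t‖ - ‖f t‖ * (⟪g t, g'⟫ / ‖g t‖)) / ‖g t‖ ^ 2
      = (⟪f t, f'⟫ / ‖f t‖ - ‖f t‖ / ‖g t‖ * (⟪g t, g'⟫ / ‖g t‖)) / ‖g t‖ := by
        field_simp
    _ ≤ (‖f'‖ + ‖f t‖ / ‖g t‖ * ‖g'‖) / ‖g t‖ := by
        gcongr
        nlinarith [div_nonneg hu.le hv.le]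

end NormRatio

theorem error_ratio_differential_inequality_general
    (n : ℕ) (tk T : ℝ)
    (nA nE β : ℝ)
    (ζ e : ℝ → EuclideanSpace ℝ (Fin n))
    (ζ' : ℝ → EuclideanSpace ℝ (Fin n))
    (hζ : ∀ t ∈ Set.Ico tk T, HasDerivAt ζ (ζ' t) t)
    (he : ∀ t ∈ Set.Ico tk T, HasDerivAt e (-ζ' t) t)
    (hζne : ∀ t ∈ Set.Ico tk T, ζ t ≠ 0)
    (hbound : ∀ t ∈ Set.Ico tk T,
      ‖ζ' t‖ ≤ (nA + β) * ‖ζ t‖ + (1 + β) * nE * ‖e t‖) :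
    ∀ t ∈ Set.Ico tk T, e t ≠ 0 →
      deriv (fun s => ‖e s‖ / ‖ζ s‖) t ≤
        β * (1 + ‖e t‖ / ‖ζ t‖) +
          max nA ((1 + β) * nE) * (1 + ‖e t‖ / ‖ζ t‖) ^ 2 := by
  intro t ht he0
  set r := ‖e t‖ / ‖ζ t‖
  set c := max nA ((1 + β) * nE)
  have hζ0 : 0 < ‖ζ t‖ := norm_pos_iff.2 (hζne t ht)
  have hr : 0 ≤ r := by positivity
  have hgrowth : ‖ζ' t‖ / ‖ζ t‖ ≤ nA + β + (1 + β) * nE * r := by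
    rw [div_le_iff₀ hζ0]
    calc ‖ζ' t‖ ≤ (nA + β) * ‖ζ t‖ + (1 + β) * nE * ‖e t‖ := hbound t ht
      _ = (nA + β + (1 + β) * nE * r) * ‖ζ t‖ := by simp only [r]; field_simp
  have hc : nA + (1 + β) * nE * r ≤ c * (1 + r) := by
    nlinarith [le_max_left nA ((1 + β) * nE), le_max_right nA ((1 + β) * nE)]
  calc deriv (fun s => ‖e s‖ / ‖ζ s‖) t ≤ (‖-ζ' t‖ + r * ‖ζ' t‖) / ‖ζ t‖ :=
        deriv_norm_div_norm_le (he t ht) (hζ t ht) he0 (hζne t ht)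
    _ = (1 + r) * (‖ζ' t‖ / ‖ζ t‖) := by rw [norm_neg]; ring
    _ ≤ (1 + r) * (β + c * (1 + r)) := by gcongr; linarith
    _ = β * (1 + r) + c * (1 + r) ^ 2 := by ring

/-- If `ζ` never vanishes, `ė = -ζ̇`, and `‖ζ̇‖ ≤ (‖A‖+β)‖ζ‖ + (1+β)‖E‖‖e‖`, then the
ratio `r = ‖e‖/‖ζ‖` satisfies `ṙ ≤ β(1+r) + c(1+r)²` with `c = max{‖A‖, (1+β)‖E‖}`
wherever `e ≠ 0`. -/
theorem error_ratio_differential_inequality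
    (n : ℕ) (tk T : ℝ)
    (nA nE β : ℝ) (hβ : 0 < β) (hnA : 0 ≤ nA) (hnE : 0 ≤ nE)
    (ζ e : ℝ → EuclideanSpace ℝ (Fin n))
    (ζ' : ℝ → EuclideanSpace ℝ (Fin n))
    (hζ : ∀ t ∈ Set.Ico tk T, HasDerivAt ζ (ζ' t) t)
    (he : ∀ t ∈ Set.Ico tk T, HasDerivAt e (-ζ' t) t)
    (hζne : ∀ t ∈ Set.Ico tk T, ζ t ≠ 0)
    (hbound : ∀ t ∈ Set.Ico tk T,
      ‖ζ' t‖ ≤ (nA + β) * ‖ζ t‖ + (1 + β) * nE * ‖e t‖) :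
    ∀ t ∈ Set.Ico tk T, e t ≠ 0 →
      deriv (fun s => ‖e s‖ / ‖ζ s‖) t ≤
        β * (1 + ‖e t‖ / ‖ζ t‖) +
          max nA ((1 + β) * nE) * (1 + ‖e t‖ / ‖ζ t‖) ^ 2 :=
  error_ratio_differential_inequality_general n tk T nA nE β ζ e ζ' hζ he hζne hbound
end

section
/- Let ξᵢ(t) = ξᵢ(0)e^{-νt} with ξᵢ(0) ≠ 0 and ν > 0, and suppose each inter-event interval of an agent satisfies the necessary condition c(t^{k+1} - t^k) ≥ |ξᵢ(0)|e^{-ν t^{k+1}} for a constant c > 0 (any triggering requires the accumulated error c(t^{k+1}-t^k) to exceed the threshold |ξᵢ(t^{k+1})|). Then the sequence of triggering times {t^k} cannot converge to a finite limit t^∞, i.e., Zeno behavior is excluded. -/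
open Filter Topology

theorem not_tendsto_of_le_mul_succ_sub {t : ℕ → ℝ} {g : ℝ → ℝ} {c a : ℝ}
    (hg : ContinuousAt g a) (hga : 0 < g a)
    (h : ∀ k, g (t (k + 1)) ≤ c * (t (k + 1) - t k)) :
    ¬ Tendsto t atTop (𝓝 a) := by
  intro ht
  have hsucc : Tendsto (fun k => t (k + 1)) atTop (𝓝 a) := ht.comp (tendsto_add_atTop_nat 1)
  have hgap : Tendsto (fun k => c * (t (k + 1) - t k)) atTop (𝓝 0) := by
    simpa using (hsucc.sub ht).const_mul c
  have hle : g a ≤ 0 := le_of_tendsto_of_tendsto' (hg.tendsto.comp hsucc) hgap h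
  exact hle.not_gt hga

theorem no_zeno_behavior_general
    (ν c ξ0 : ℝ) (hξ0 : ξ0 ≠ 0)
    (t : ℕ → ℝ)
    (hcond : ∀ k : ℕ, |ξ0| * Real.exp (-ν * t (k + 1)) ≤ c * (t (k + 1) - t k)) :
    ∀ tinf : ℝ, ¬ Tendsto t atTop (nhds tinf) := fun tinf =>
  not_tendsto_of_le_mul_succ_sub (g := fun x => |ξ0| * Real.exp (-ν * x))
    (by fun_prop) (by positivity) hcond

/-- Exclusion of Zeno behavior: if each inter-event interval satisfies
`c(t^{k+1} - t^k) ≥ |ξ₀| e^{-ν t^{k+1}}` with `c > 0`, `ν > 0` and `ξ₀ ≠ 0`, then the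
triggering times cannot accumulate at a finite time. -/
theorem no_zeno_behavior
    (ν c ξ0 : ℝ) (hν : 0 < ν) (hc : 0 < c) (hξ0 : ξ0 ≠ 0)
    (t : ℕ → ℝ)
    (hcond : ∀ k : ℕ, |ξ0| * Real.exp (-ν * t (k + 1)) ≤ c * (t (k + 1) - t k)) :
    ∀ tinf : ℝ, ¬ Tendsto t atTop (nhds tinf) :=
  no_zeno_behavior_general ν c ξ0 hξ0 t hcond
end
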